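/- arXiv:1212.4467 — 6 statements merged into one kernel-verified Lean document; each statement's English description precedes it below -/
import Mathlib

section
/- Let f be a continuous function on the unit circle with f(z) ≥ 0 for all |z| = 1 and f not identically zero. Suppose p_0, …, p_{n−1} are polynomials with complex coefficients such that p_k has degree k with leading coefficient κ_k > 0 and ∮_{|z|=1} conj(p_j(z)) p_k(z) f(z) dz/(2πiz) = δ_{jk} for all 0 ≤ j, k ≤ n−1. Then the continuous Toeplitz determinant satisfies 𝒯_n(f) = ∏_{j=0}^{n−1} κ_j^{−2}. -/
/-!
Let `B` be the matrix whose `k`-th column holds the coefficients of `p_k`. On the unit circle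
`conj z = z⁻¹`, so `conj (p_j z) * p_k z` is a Laurent polynomial whose coefficients are products
of entries of `B`; integrating it against `f` turns the orthonormality relations into the matrix
identity `Bᴴ T B = 1` for the Toeplitz matrix `T`. Since `B` is upper triangular with diagonal
`κ`, taking determinants gives `det T = |det B|⁻² = ∏ κ_j⁻²`.
-/

open Finset Polynomial ComplexConjugate Metric Matrix

/-- `circleMoment f m` is the Fourier coefficient `f̂(-m)` of `f` on the unit circle. -/
noncomputable def circleMoment (f : ℂ → ℂ) (m : ℤ) : ℂ :=
  (∮ z in C(0, 1), z ^ m * f z / z) / (2 * Real.pi * Complex.I)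

noncomputable def toeplitzMatrix (f : ℂ → ℂ) (n : ℕ) : Matrix (Fin n) (Fin n) ℂ :=
  Matrix.of fun r s => circleMoment f (s - r)

def Polynomial.coeffMatrix {R : Type*} [Semiring R] {n : ℕ} (p : Fin n → R[X]) :
    Matrix (Fin n) (Fin n) R :=
  Matrix.of fun r k => (p k).coeff r

lemma Polynomial.eval_eq_sum_fin {R : Type*} [Semiring R] {p : R[X]} {n : ℕ}
    (hp : p.natDegree < n) (x : R) : p.eval x = ∑ r : Fin n, p.coeff r * x ^ (r : ℕ) := by
  rw [eval_eq_sum_range' hp, Fin.sum_univ_eq_sum_range (fun r => p.coeff r * x ^ r)]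

lemma Polynomial.det_coeffMatrix {R : Type*} [CommRing R] {n : ℕ} {p : Fin n → R[X]}
    (hdeg : ∀ k, (p k).natDegree = k) : (coeffMatrix p).det = ∏ k, (p k).leadingCoeff := by
  rw [det_of_isUpperTriangular (M := coeffMatrix p) fun r k hkr =>
    coeff_eq_zero_of_natDegree_lt ((hdeg k).trans_lt hkr)]
  exact prod_congr rfl fun k _ => by rw [coeffMatrix, of_apply, ← hdeg k, coeff_natDegree]

lemma Matrix.det_eq_inv_of_conjTranspose_mul_mul_eq_one {m K : Type*} [Fintype m]
    [DecidableEq m] [Field K] [StarRing K] {B T : Matrix m m K} (h : Bᴴ * T * B = 1) :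
    T.det = (star B.det * B.det)⁻¹ := by
  apply eq_inv_of_mul_eq_one_left
  have hdet := congrArg det h
  rw [det_mul, det_mul, det_conjTranspose, det_one] at hdet
  rw [← hdet]
  ring

lemma conj_eval_mul_eval_of_norm_eq_one {z : ℂ} (hz : ‖z‖ = 1) {p q : ℂ[X]} {n : ℕ}
    (hp : p.natDegree < n) (hq : q.natDegree < n) :
    conj (p.eval z) * q.eval z =
      ∑ r : Fin n, ∑ s : Fin n, conj (p.coeff r) * q.coeff s * z ^ ((s : ℤ) - r) := by
  have hz0 : z ≠ 0 := norm_ne_zero_iff.mp (hz ▸ one_ne_zero)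
  rw [eval_eq_sum_fin hp, eval_eq_sum_fin hq, map_sum, sum_mul_sum]
  refine sum_congr rfl fun r _ => sum_congr rfl fun s _ => ?_
  rw [map_mul, map_pow, ← Complex.inv_eq_conj hz, zpow_sub₀ hz0, zpow_natCast, zpow_natCast,
    inv_pow, div_eq_mul_inv]
  ring

lemma circleIntegrable_zpow_mul_div {f : ℂ → ℂ} (hf : ContinuousOn f (sphere 0 1)) (m : ℤ) :
    CircleIntegrable (fun z => z ^ m * f z / z) 0 1 := by
  have hz0 : ∀ z ∈ sphere (0 : ℂ) 1, z ≠ 0 := fun z hz => ne_zero_of_mem_unit_sphere ⟨z, hz⟩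
  refine ContinuousOn.circleIntegrable zero_le_one ?_
  exact ((continuousOn_id.zpow₀ m fun z hz => Or.inl (hz0 z hz)).mul hf).div continuousOn_id hz0

lemma circleIntegral_conj_eval_mul_eval {f : ℂ → ℂ} (hf : ContinuousOn f (sphere 0 1))
    {p q : ℂ[X]} {n : ℕ} (hp : p.natDegree < n) (hq : q.natDegree < n) :
    (∮ z in C(0, 1), conj (p.eval z) * q.eval z * f z / z) / (2 * Real.pi * Complex.I) =
      ∑ r : Fin n, ∑ s : Fin n, conj (p.coeff r) * circleMoment f (s - r) * q.coeff s := by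
  have hexpand : Set.EqOn (fun z => conj (p.eval z) * q.eval z * f z / z)
      (fun z => ∑ r : Fin n, ∑ s : Fin n,
        conj (p.coeff r) * q.coeff s * (z ^ ((s : ℤ) - r) * f z / z)) (sphere 0 1) := by
    intro z hz
    simp only [conj_eval_mul_eval_of_norm_eq_one (mem_sphere_zero_iff_norm.mp hz) hp hq,
      sum_mul, sum_div, mul_div_assoc, mul_assoc]
  have hint : ∀ r s : Fin n, CircleIntegrable
      (fun z => conj (p.coeff r) * q.coeff s * (z ^ ((s : ℤ) - r) * f z / z)) 0 1 :=
    fun r s => (circleIntegrable_zpow_mul_div hf _).const_smul (a := conj (p.coeff r) * q.coeff s)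
  rw [circleIntegral.integral_congr zero_le_one hexpand,
    circleIntegral.integral_fun_sum fun r _ => CircleIntegrable.fun_sum _ fun s _ => hint r s,
    sum_div]
  refine sum_congr rfl fun r _ => ?_
  rw [circleIntegral.integral_fun_sum fun s _ => hint r s, sum_div]
  refine sum_congr rfl fun s _ => ?_
  rw [circleIntegral.integral_const_mul, circleMoment]
  ring

lemma conjTranspose_mul_toeplitzMatrix_mul_eq_one_of_orthonormal {f : ℂ → ℂ}
    (hf : ContinuousOn f (sphere 0 1)) {n : ℕ} {p : Fin n → ℂ[X]}
    (hdeg : ∀ k, (p k).natDegree < n)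
    (horth : ∀ j k : Fin n,
      (∮ z in C(0, 1), conj ((p j).eval z) * (p k).eval z * f z / z)
        / (2 * Real.pi * Complex.I) = if j = k then 1 else 0) :
    (coeffMatrix p)ᴴ * toeplitzMatrix f n * coeffMatrix p = 1 := by
  ext j k
  rw [one_apply, ← horth, circleIntegral_conj_eval_mul_eval hf (hdeg j) (hdeg k), sum_comm]
  simp [mul_apply, sum_mul, coeffMatrix, toeplitzMatrix]

theorem stmt_2_general (n : ℕ) (f : ℂ → ℂ)
    (hf_cont : ContinuousOn f {z : ℂ | ‖z‖ = 1})
    (p : Fin n → Polynomial ℂ) (κ : Fin n → ℝ)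
    (hdeg : ∀ k, (p k).natDegree = (k : ℕ))
    (hlead : ∀ k, (p k).leadingCoeff = (κ k : ℂ))
    (horth : ∀ j k : Fin n,
      (∮ z in C(0, 1), (starRingEnd ℂ) ((p j).eval z) * (p k).eval z * f z / z)
        / (2 * Real.pi * Complex.I) = if j = k then 1 else 0) :
    Matrix.det (Matrix.of fun j k : Fin n =>
      (∮ z in C(0, 1), z ^ ((k : ℤ) - (j : ℤ)) * f z / z) / (2 * Real.pi * Complex.I))
    = ∏ j : Fin n, ((κ j : ℂ)) ^ (-2 : ℤ) := by
  have hsphere : sphere (0 : ℂ) 1 = {z : ℂ | ‖z‖ = 1} := by ext z; simp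
  have hgram := conjTranspose_mul_toeplitzMatrix_mul_eq_one_of_orthonormal (hsphere ▸ hf_cont)
    (fun k => (hdeg k).trans_lt k.isLt) horth
  change (toeplitzMatrix f n).det = _
  rw [det_eq_inv_of_conjTranspose_mul_mul_eq_one hgram, det_coeffMatrix hdeg]
  simp only [hlead, star_prod, Complex.star_def, Complex.conj_ofReal, _root_.zpow_neg, zpow_ofNat,
    prod_inv_distrib, prod_mul_distrib, sq]

/-- If `p_0, …, p_{n−1}` are orthonormal polynomials (with `deg p_k = k` and
positive leading coefficients `κ_k`) for the weight `f(z) dz/(2πiz)` on the unit circle, where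
`f` is continuous, nonnegative and not identically zero on the circle, then the continuous
Toeplitz determinant `𝒯_n(f)` equals `∏_{j<n} κ_j⁻²`. -/
theorem stmt_2 (n : ℕ) (hn : 0 < n) (f : ℂ → ℂ)
    (hf_cont : ContinuousOn f {z : ℂ | ‖z‖ = 1})
    (hf_nonneg : ∀ z : ℂ, ‖z‖ = 1 → 0 ≤ (f z).re ∧ (f z).im = 0)
    (hf_ne : ∃ z : ℂ, ‖z‖ = 1 ∧ f z ≠ 0)
    (p : Fin n → Polynomial ℂ) (κ : Fin n → ℝ)
    (hdeg : ∀ k, (p k).natDegree = (k : ℕ))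
    (hκpos : ∀ k, 0 < κ k)
    (hlead : ∀ k, (p k).leadingCoeff = (κ k : ℂ))
    (horth : ∀ j k : Fin n,
      (∮ z in C(0, 1), (starRingEnd ℂ) ((p j).eval z) * (p k).eval z * f z / z)
        / (2 * Real.pi * Complex.I) = if j = k then 1 else 0) :
    Matrix.det (Matrix.of fun j k : Fin n =>
      (∮ z in C(0, 1), z ^ ((k : ℤ) - (j : ℤ)) * f z / z) / (2 * Real.pi * Complex.I))
    = ∏ j : Fin n, ((κ j : ℂ)) ^ (-2 : ℤ) :=
  stmt_2_general n f hf_cont p κ hdeg hlead horth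
end

section
/- Let n ≥ 1, M > 0, and let β_0 < β_1 < ⋯ < β_{n−1} < β_0 + M be real numbers. Suppose σ is a permutation of {0, 1, …, n−1} and h_0, …, h_{n−1} are integers with h_0 + h_1 + ⋯ + h_{n−1} = 0 such that the numbers β'_j := β_{σ(j)} + h_j M satisfy β'_0 < β'_1 < ⋯ < β'_{n−1} < β'_0 + M. Then σ is the identity permutation and h_j = 0 for all j. -/
/-!
Comparing `β'` with `β` at the indices `0 ≤ j`: both `β'_j - β'_0 ∈ [0, M)` and
`β_{σ j} - β_{σ 0} ∈ (-M, M)`, so the integer `h_j - h_0` lies in `(-1, 2)`. Integers that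
all lie in `{h_0, h_0 + 1}` and sum to zero are all zero. Then `β' = β ∘ σ` is strictly
monotone, which forces the permutation `σ` of the finite chain `Fin n` to be the identity.
-/

open Finset

theorem Int.eq_zero_of_sum_eq_zero_of_mem_Icc {ι : Type*} {s : Finset ι} {f : ι → ℤ} {a : ℤ}
    (hf : ∀ i ∈ s, f i ∈ Set.Icc a (a + 1)) (hsum : ∑ i ∈ s, f i = 0) :
    ∀ i ∈ s, f i = 0 := by
  rcases le_or_gt 0 a with ha | ha
  · exact (sum_eq_zero_iff_of_nonneg fun i hi => ha.trans (hf i hi).1).mp hsum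
  · exact (sum_eq_zero_iff_of_nonpos fun i hi => (hf i hi).2.trans (by omega)).mp hsum

theorem Int.mem_Icc_zero_one_of_mul_mem_Ioo {M : ℝ} (hM : 0 < M) {k : ℤ}
    (hlo : -M < k * M) (hhi : k * M < 2 * M) : k ∈ Set.Icc 0 1 := by
  have hlo' : ((-1 : ℤ) : ℝ) < k := by
    push_cast; exact _root_.lt_of_mul_lt_mul_right (by linarith) hM.le
  have hhi' : (k : ℝ) < ((2 : ℤ) : ℝ) := _root_.lt_of_mul_lt_mul_right hhi hM.le
  have : -1 < k ∧ k < 2 := ⟨by exact_mod_cast hlo', by exact_mod_cast hhi'⟩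
  exact ⟨by omega, by omega⟩

theorem Fin.sub_lt_of_monotone_of_last_lt {n : ℕ} (hn : 1 ≤ n) {f : Fin n → ℝ}
    (hf : Monotone f) {M : ℝ} (hlast : f ⟨n - 1, Nat.sub_lt hn Nat.one_pos⟩ < f ⟨0, hn⟩ + M)
    (a b : Fin n) : f a - f b < M := by
  have ha : f a ≤ f ⟨n - 1, Nat.sub_lt hn Nat.one_pos⟩ :=
    hf (Fin.le_def.mpr (show (a : ℕ) ≤ n - 1 by omega))
  have hb : f ⟨0, hn⟩ ≤ f b := hf (Fin.le_def.mpr (Nat.zero_le _))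
  linarith

/-- Key uniqueness property `𝕃_M(β) ∩ D_n(M) = {β}` of the affine
Karlin–McGregor argument: if `β_0 < ⋯ < β_{n−1} < β_0 + M` and a rearrangement
`β'_j = β_{σ(j)} + h_j M` (with `Σ h_j = 0`) again satisfies
`β'_0 < ⋯ < β'_{n−1} < β'_0 + M`, then `σ = id` and all `h_j = 0`. -/
theorem stmt_6 (n : ℕ) (hn : 1 ≤ n) (M : ℝ)
    (β : Fin n → ℝ) (hβ : StrictMono β)
    (hβM : β ⟨n - 1, by omega⟩ < β ⟨0, by omega⟩ + M)
    (σ : Equiv.Perm (Fin n)) (h : Fin n → ℤ) (hsum : ∑ j, h j = 0)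
    (β' : Fin n → ℝ) (hβ' : ∀ j, β' j = β (σ j) + (h j : ℝ) * M)
    (hβ'mono : StrictMono β')
    (hβ'M : β' ⟨n - 1, by omega⟩ < β' ⟨0, by omega⟩ + M) :
    σ = 1 ∧ ∀ j, h j = 0 := by
  set z : Fin n := ⟨0, hn⟩
  have hspread := Fin.sub_lt_of_monotone_of_last_lt hn hβ.monotone hβM
  have hspread' := Fin.sub_lt_of_monotone_of_last_lt hn hβ'mono.monotone hβ'M
  have hM : 0 < M := by simpa using hspread z z
  have hrange : ∀ j, h j - h z ∈ Set.Icc 0 1 := fun j => by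
    have hjz : β' z ≤ β' j := hβ'mono.monotone (Fin.le_def.mpr (Nat.zero_le _))
    have hdiff : ((h j - h z : ℤ) : ℝ) * M = (β' j - β' z) - (β (σ j) - β (σ z)) := by
      rw [hβ' j, hβ' z]; push_cast; ring
    refine Int.mem_Icc_zero_one_of_mul_mem_Ioo hM ?_ ?_ <;>
      linarith [hspread (σ j) (σ z), hspread (σ z) (σ j), hspread' j z]
  have hzero : ∀ j, h j = 0 := fun j =>
    Int.eq_zero_of_sum_eq_zero_of_mem_Icc (a := h z)
      (fun i _ => ⟨by linarith [(hrange i).1], by linarith [(hrange i).2]⟩) hsum j (mem_univ j)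
  have hσ : StrictMono σ := fun i j hij => by
    have := hβ'mono hij
    rw [hβ' i, hβ' j, hzero i, hzero j] at this
    exact hβ.lt_iff_lt.mp (by simpa using this)
  exact ⟨Equiv.ext fun j => hσ.apply_eq, hzero⟩
end

section
/- Fix n ≥ 1 and x = (x_0, …, x_{n−1}) ∈ ℝ^n. Then, as y = (y_0, …, y_{n−1}) → 0 along vectors with pairwise distinct coordinates, det[ e^{x_j y_k} ]_{j,k=0}^{n−1} / Δ(y) converges to (∏_{j=0}^{n−1} 1/j!) · Δ(x), where Δ(x) = ∏_{0 ≤ j < k ≤ n−1} (x_k − x_j) is the Vandermonde determinant. -/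
/-!
Multiplying `[f_j(y_i)]` on the right by the upper-triangular matrix of Lagrange weights of the
nodes `y_0, …, y_{n-1}` turns column `k` into the divided differences `f_j[y_0, …, y_k]`; that
matrix has determinant `1 / Δ(y)`, so `det[f_j(y_k)] / Δ(y) = det[f_j[y_0, …, y_k]]`.

On distinct nodes,
`f[y_0, …, y_k] = ∫₀¹ s^{k-1} f'[y_0 + s (y_1 - y_0), …, y_0 + s (y_k - y_0)] ds`:
peel off `y_0` with `f[y_0, y_1, …] = (slope f y_0)[y_1, …]`, write the slope as an integral of
`f'`, and rescale the nodes. Iterating, the right-hand side is continuous in the nodes for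
`f ∈ C^k`, including where they collide, and equals `f^{(k)}(a) / k!` when all of them equal `a`.
For `f_j(t) = e^{x_j t}` and `a = 0` the limit matrix `[x_j^k / k!]` is a Vandermonde matrix with
rescaled columns.
-/

open Finset

/-- The Vandermonde product `Δ(x) = ∏_{j<k} (x_k − x_j)`. -/
noncomputable def vand {n : ℕ} (x : Fin n → ℝ) : ℝ :=
  ∏ j : Fin n, ∏ k ∈ Finset.univ.filter (fun k => j < k), (x k - x j)

lemma vand_eq_det_vandermonde {n : ℕ} (x : Fin n → ℝ) :
    vand x = (Matrix.vandermonde x).det := by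
  rw [Matrix.det_vandermonde, vand]
  simp only [filter_lt_eq_Ioi]

lemma vand_eq_prod_prod_range {n : ℕ} (y : ℕ → ℝ) :
    vand (fun k : Fin n => y k) = ∏ k : Fin n, ∏ l ∈ range k, (y k - y l) := by
  rw [vand, prod_comm' (s' := fun k => Iio k) (t' := univ) (by simp)]
  refine prod_congr rfl fun k _ => ?_
  rw [← Nat.Iio_eq_range, ← Fin.map_valEmbedding_Iio, prod_map]
  rfl

-- Lagrange form of the divided difference `f[y_0, …, y_k]`; junk unless the nodes are distinct.
noncomputable def divDiff (f : ℝ → ℝ) (k : ℕ) (y : ℕ → ℝ) : ℝ :=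
  ∑ i ∈ range (k + 1), f (y i) * ∏ l ∈ (range (k + 1)).erase i, (y i - y l)⁻¹

lemma divDiff_congr {f g : ℝ → ℝ} {k : ℕ} {y : ℕ → ℝ}
    (hfg : ∀ i ∈ range (k + 1), f (y i) = g (y i)) : divDiff f k y = divDiff g k y :=
  sum_congr rfl fun i hi => by rw [hfg i hi]

lemma sum_prod_inv_sub_eq_zero {k : ℕ} (hk : 1 ≤ k) {y : ℕ → ℝ}
    (hy : Set.InjOn y (range (k + 1))) :
    ∑ i ∈ range (k + 1), ∏ l ∈ (range (k + 1)).erase i, (y i - y l)⁻¹ = 0 := by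
  have hcoeff := congrArg (Polynomial.coeff · k) (Lagrange.sum_basis hy ⟨0, by simp⟩)
  simp only [Polynomial.finsetSum_coeff, Polynomial.coeff_one, if_neg (by omega : k ≠ 0)]
    at hcoeff
  rw [← hcoeff]
  refine sum_congr rfl fun i hi => ?_
  have hdeg : (Lagrange.basis (range (k + 1)) y i).natDegree = k := by
    simpa using Lagrange.natDegree_basis hy hi
  rw [show (Lagrange.basis _ y i).coeff k = (Lagrange.basis _ y i).leadingCoeff by
      rw [Polynomial.leadingCoeff, hdeg], Lagrange.basis, Polynomial.leadingCoeff_prod]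
  refine prod_congr rfl fun l _ => ?_
  rw [Lagrange.basisDivisor, Polynomial.leadingCoeff_mul, Polynomial.leadingCoeff_C,
    (Polynomial.monic_X_sub_C _).leadingCoeff, mul_one]

lemma range_succ_erase_succ (k i : ℕ) :
    (range (k + 2)).erase (i + 1) =
      insert 0 (((range (k + 1)).erase i).map (addRightEmbedding 1)) := by
  ext (_ | a) <;> simp

lemma divDiff_succ (f : ℝ → ℝ) {k : ℕ} {y : ℕ → ℝ}
    (hy : Set.InjOn y (range (k + 2))) :
    divDiff f (k + 1) y = divDiff (slope f (y 0)) k (fun i => y (i + 1)) := by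
  set P : ℕ → ℝ := fun i => ∏ l ∈ (range (k + 2)).erase i, (y i - y l)⁻¹
  have hP : ∀ i, P (i + 1) =
      (y (i + 1) - y 0)⁻¹ * ∏ l ∈ (range (k + 1)).erase i, (y (i + 1) - y (l + 1))⁻¹ := by
    intro i
    simp only [P]
    rw [range_succ_erase_succ, prod_insert (by simp), prod_map]
    rfl
  have hsum : ∑ i ∈ range (k + 1), P (i + 1) = -P 0 := by
    have := sum_prod_inv_sub_eq_zero (by omega) hy
    rw [sum_range_succ'] at this
    linarith
  calc divDiff f (k + 1) y
      = ∑ i ∈ range (k + 1), f (y (i + 1)) * P (i + 1) -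
          f (y 0) * ∑ i ∈ range (k + 1), P (i + 1) := by
        rw [hsum, divDiff, sum_range_succ']; ring
    _ = divDiff (slope f (y 0)) k (fun i => y (i + 1)) := by
        rw [divDiff, mul_sum, ← sum_sub_distrib]
        refine sum_congr rfl fun i _ => ?_
        rw [hP, slope_def_field]
        ring

lemma divDiff_comp_homothety (f : ℝ → ℝ) (k : ℕ) (y : ℕ → ℝ) (b : ℝ) {s : ℝ}
    (hs : s ≠ 0) :
    divDiff (fun t => f (b + s * (t - b))) k y =
      s ^ k * divDiff f k (fun i => b + s * (y i - b)) := by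
  rw [divDiff, divDiff, mul_sum]
  refine sum_congr rfl fun i hi => ?_
  have hcard : #((range (k + 1)).erase i) = k := by simp [card_erase_of_mem hi]
  have hscale : ∀ l, b + s * (y i - b) - (b + s * (y l - b)) = s * (y i - y l) := fun l => by ring
  simp only [hscale, mul_inv, prod_mul_distrib, prod_const, hcard]
  rw [inv_pow, mul_left_comm, ← mul_assoc (s ^ k), mul_inv_cancel₀ (pow_ne_zero k hs), one_mul]

lemma divDiff_intervalIntegral (g : ℝ → ℝ → ℝ) (k : ℕ) (y : ℕ → ℝ) {a b : ℝ}
    (hg : ∀ i ∈ range (k + 1),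
      IntervalIntegrable (fun s => g s (y i)) MeasureTheory.volume a b) :
    divDiff (fun t => ∫ s in a..b, g s t) k y = ∫ s in a..b, divDiff (g s) k y := by
  simp only [divDiff]
  rw [intervalIntegral.integral_finsetSum fun i hi => (hg i hi).mul_const _]
  simp only [intervalIntegral.integral_mul_const]

lemma slope_eq_integral_deriv {f : ℝ → ℝ} (hf : ContDiff ℝ 1 f) {b t : ℝ} (ht : t ≠ b) :
    slope f b t = ∫ s in (0:ℝ)..1, deriv f (b + s * (t - b)) := by
  have hderiv := intervalIntegral.integral_deriv_eq_sub (a := b) (b := t)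
    (fun x _ => (hf.differentiable one_ne_zero).differentiableAt)
    ((hf.continuous_deriv le_rfl).intervalIntegrable _ _)
  simp_rw [mul_comm _ (t - b)]
  rw [intervalIntegral.integral_comp_add_mul _ (sub_ne_zero.2 ht)]
  simp [hderiv, slope]

noncomputable def divDiffExt : ℕ → (ℝ → ℝ) → (ℕ → ℝ) → ℝ
  | 0, f, y => f (y 0)
  | k + 1, f, y =>
    ∫ s in (0:ℝ)..1, s ^ k * divDiffExt k (deriv f) (fun i => y 0 + s * (y (i + 1) - y 0))

lemma continuous_divDiffExt {k : ℕ} {f : ℝ → ℝ} (hf : ContDiff ℝ k f) :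
    Continuous (divDiffExt k f) := by
  induction k generalizing f with
  | zero => exact hf.continuous.comp (continuous_apply 0)
  | succ k ih =>
    have hf' : ContDiff ℝ k (deriv f) := (contDiff_succ_iff_deriv.1 hf).2.2
    have hnodes : Continuous fun p : (ℕ → ℝ) × ℝ =>
        fun i => p.1 0 + p.2 * (p.1 (i + 1) - p.1 0) :=
      continuous_pi fun i => by fun_prop
    exact intervalIntegral.continuous_parametric_intervalIntegral_of_continuous'
      ((continuous_snd.pow k).mul ((ih hf').comp hnodes)) 0 1

lemma divDiffExt_of_forall_eq {k : ℕ} {f : ℝ → ℝ} {y : ℕ → ℝ} {a : ℝ}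
    (hy : ∀ i ≤ k, y i = a) :
    divDiffExt k f y = iteratedDeriv k f a / k.factorial := by
  induction k generalizing f y with
  | zero => simp [divDiffExt, hy 0 le_rfl]
  | succ k ih =>
    have hnodes : ∀ s : ℝ, ∀ i ≤ k, y 0 + s * (y (i + 1) - y 0) = a := fun s i hi => by
      rw [hy 0 (by omega), hy (i + 1) (by omega)]; ring
    simp only [divDiffExt, fun s => ih (f := deriv f) (hnodes s),
      intervalIntegral.integral_mul_const, integral_pow, iteratedDeriv_succ', Nat.factorial_succ]
    push_cast
    field_simp
    ring

lemma divDiffExt_eq_divDiff {k : ℕ} {f : ℝ → ℝ} (hf : ContDiff ℝ k f) {y : ℕ → ℝ}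
    (hy : Set.InjOn y (range (k + 1))) : divDiffExt k f y = divDiff f k y := by
  induction k generalizing f y with
  | zero => simp [divDiffExt, divDiff]
  | succ k ih =>
    have hf' : ContDiff ℝ k (deriv f) := (contDiff_succ_iff_deriv.1 hf).2.2
    have hf1 : ContDiff ℝ 1 f := hf.of_le (by exact_mod_cast Nat.succ_pos k)
    have htail : Set.InjOn (fun i => y (i + 1)) (range (k + 1)) := fun a ha b hb hab =>
      Nat.succ_injective (hy (by simp_all) (by simp_all) hab)
    have hne : ∀ i ∈ range (k + 1), y (i + 1) ≠ y 0 := fun i hi h =>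
      (Nat.succ_ne_zero i) (hy (by simp_all) (by simp) h)
    have hint : ∀ i ∈ range (k + 1), IntervalIntegrable
        (fun s => deriv f (y 0 + s * (y (i + 1) - y 0))) MeasureTheory.volume 0 1 := fun i _ =>
      ((hf1.continuous_deriv le_rfl).comp (by fun_prop)).intervalIntegrable 0 1
    rw [divDiff_succ f hy,
      divDiff_congr (g := fun t => ∫ s in (0:ℝ)..1, deriv f (y 0 + s * (t - y 0)))
        fun i hi => slope_eq_integral_deriv hf1 (hne i hi),
      divDiff_intervalIntegral _ _ _ hint, divDiffExt]
    refine intervalIntegral.integral_congr_ae (MeasureTheory.ae_of_all _ fun s hs => ?_)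
    have hs : s ≠ 0 := (Set.uIoc_of_le (zero_le_one' ℝ) ▸ hs).1.ne'
    have hhom : Function.Injective fun t => y 0 + s * (t - y 0) := fun a b h => by
      simpa [hs] using h
    rw [divDiff_comp_homothety _ _ _ _ hs, ih hf' (y := fun i => y 0 + s * (y (i + 1) - y 0))
      (hhom.comp_injOn htail)]

noncomputable def divDiffWeights (n : ℕ) (y : ℕ → ℝ) : Matrix (Fin n) (Fin n) ℝ :=
  Matrix.of fun i k =>
    if (i : ℕ) ≤ k then ∏ l ∈ (range (k + 1)).erase i, (y i - y l)⁻¹ else 0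

lemma det_divDiffWeights (n : ℕ) (y : ℕ → ℝ) :
    (divDiffWeights n y).det = (vand fun k : Fin n => y k)⁻¹ := by
  have hupper : (divDiffWeights n y).IsUpperTriangular := fun i k (hki : k < i) => by
    simp [divDiffWeights, hki.not_ge]
  rw [Matrix.det_of_isUpperTriangular hupper, vand_eq_prod_prod_range, ← prod_inv_distrib]
  refine prod_congr rfl fun k _ => ?_
  simp [divDiffWeights, range_add_one, prod_inv_distrib]

lemma mul_divDiffWeights {ι : Type*} {n : ℕ} (f : ι → ℝ → ℝ) (y : ℕ → ℝ) :
    Matrix.of (fun j (k : Fin n) => f j (y k)) * divDiffWeights n y =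
      Matrix.of fun j (k : Fin n) => divDiff (f j) k y := by
  ext j k
  simp only [Matrix.mul_apply, Matrix.of_apply, divDiffWeights, mul_ite, mul_zero]
  rw [Fin.sum_univ_eq_sum_range (fun i => if i ≤ (k : ℕ) then
      f j (y i) * ∏ l ∈ (range (k + 1)).erase i, (y i - y l)⁻¹ else 0),
    ← sum_filter, divDiff]
  congr 1
  ext i
  simp only [mem_filter, mem_range]
  omega

theorem det_div_vand_eq_det_divDiff {n : ℕ} (f : Fin n → ℝ → ℝ) (y : ℕ → ℝ) :
    (Matrix.of fun j k : Fin n => f j (y k)).det / vand (fun k : Fin n => y k) =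
      (Matrix.of fun j k : Fin n => divDiff (f j) k y).det := by
  rw [div_eq_mul_inv, ← det_divDiffWeights, ← Matrix.det_mul, mul_divDiffWeights]

noncomputable def natNodes {n : ℕ} (a : ℝ) (y : Fin n → ℝ) : ℕ → ℝ :=
  fun i => if h : i < n then y ⟨i, h⟩ else a

lemma natNodes_coe {n : ℕ} (a : ℝ) (y : Fin n → ℝ) (k : Fin n) : natNodes a y k = y k := by
  simp [natNodes]

lemma natNodes_const {n : ℕ} (a : ℝ) (i : ℕ) : natNodes a (fun _ : Fin n => a) i = a := by
  by_cases hi : i < n <;> simp [natNodes, hi]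

lemma continuous_natNodes {n : ℕ} (a : ℝ) : Continuous (natNodes (n := n) a) :=
  continuous_pi fun i => by
    by_cases hi : i < n <;> simp only [natNodes, hi, dite_true, dite_false] <;> fun_prop

lemma injOn_natNodes {n : ℕ} (a : ℝ) {y : Fin n → ℝ} (hy : Function.Injective y) :
    Set.InjOn (natNodes a y) (range n) := fun i hi l hl hil => by
  simp only [coe_range, Set.mem_Iio] at hi hl
  simp only [natNodes, hi, hl, dite_true] at hil
  simpa using hy hil

theorem tendsto_det_div_vand {n : ℕ} (f : Fin n → ℝ → ℝ)
    (hf : ∀ j, ContDiff ℝ (n - 1 : ℕ) (f j)) (a : ℝ) :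
    Filter.Tendsto (fun y : Fin n → ℝ => (Matrix.of fun j k : Fin n => f j (y k)).det / vand y)
      (nhdsWithin (fun _ => a) {y | Function.Injective y})
      (nhds (Matrix.of fun j k : Fin n => iteratedDeriv k (f j) a / (k : ℕ).factorial).det) := by
  set G : (Fin n → ℝ) → ℝ := fun y =>
    (Matrix.of fun j k : Fin n => divDiffExt k (f j) (natNodes a y)).det
  have hsmooth : ∀ j (k : Fin n), ContDiff ℝ k (f j) := fun j k =>
    (hf j).of_le (by exact_mod_cast Nat.le_sub_one_of_lt k.isLt)
  have hcont : Continuous G := Continuous.matrix_det <| continuous_matrix fun j k =>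
    (continuous_divDiffExt (hsmooth j k)).comp (continuous_natNodes a)
  have hG_const : G (fun _ => a) =
      (Matrix.of fun j k : Fin n => iteratedDeriv k (f j) a / (k : ℕ).factorial).det := by
    simp only [G, divDiffExt_of_forall_eq fun i _ => natNodes_const a i]
  have hG_eq : ∀ y : Fin n → ℝ, Function.Injective y →
      G y = (Matrix.of fun j k : Fin n => f j (y k)).det / vand y := fun y hy => by
    have hinj : ∀ k : Fin n, Set.InjOn (natNodes a y) (range (k + 1)) := fun k =>
      (injOn_natNodes a hy).mono (by simp [k.isLt])
    simp only [G, divDiffExt_eq_divDiff (hsmooth _ _) (hinj _), ← det_div_vand_eq_det_divDiff,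
      natNodes_coe]
  exact hG_const ▸ ((hcont.tendsto _).mono_left nhdsWithin_le_nhds).congr'
    (eventually_nhdsWithin_of_forall hG_eq)

theorem stmt_8_general (n : ℕ) (x : Fin n → ℝ) :
    Filter.Tendsto
      (fun y : Fin n → ℝ =>
        Matrix.det (Matrix.of fun j k : Fin n => Real.exp (x j * y k)) / vand y)
      (nhdsWithin 0 {y : Fin n → ℝ | Function.Injective y})
      (nhds ((∏ j : Fin n, (1 / ((j : ℕ).factorial : ℝ))) * vand x)) := by
  have hlimit : (Matrix.of fun j k : Fin n =>
      iteratedDeriv k (fun t => Real.exp (x j * t)) 0 / (k : ℕ).factorial).det =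
      (∏ j : Fin n, (1 / ((j : ℕ).factorial : ℝ))) * vand x := by
    rw [vand_eq_det_vandermonde, ← Matrix.det_diagonal, mul_comm, ← Matrix.det_mul]
    congr 1
    ext j k
    simp [Matrix.vandermonde, Matrix.mul_diagonal, div_eq_mul_inv]
  exact hlimit ▸ tendsto_det_div_vand (fun j t => Real.exp (x j * t)) (fun j => by fun_prop) 0

/-- As `y → 0` along vectors with pairwise distinct coordinates,
`det[e^{x_j y_k}] / Δ(y) → (∏_j 1/j!) Δ(x)`. -/
theorem stmt_8 (n : ℕ) (hn : 1 ≤ n) (x : Fin n → ℝ) :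
    Filter.Tendsto
      (fun y : Fin n → ℝ =>
        Matrix.det (Matrix.of fun j k : Fin n => Real.exp (x j * y k)) / vand y)
      (nhdsWithin 0 {y : Fin n → ℝ | Function.Injective y})
      (nhds ((∏ j : Fin n, (1 / ((j : ℕ).factorial : ℝ))) * vand x)) :=
  stmt_8_general n x
end

section
/- Let T > 0, let M be a positive integer, let x be an integer, and let s ∈ ℂ with |s| = 1. Then Σ_{h ∈ ℤ} p_T(x + hM) s^h = (e^{−T}/M) Σ_{z ∈ ℂ : z^M = s} z^{−x} e^{(T/2)(z + z^{−1})}, where p_T(k) = e^{−T} (1/(2π)) ∫_0^{2π} e^{−ikθ} e^{T cos θ} dθ and the series on the left converges absolutely. -/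
/-!
At `z = e^{iθ}` one has `T cos θ = (T/2)(z + z⁻¹)`, and multiplying the exponential series of
`Tz/2` and `T/(2z)` gives the Laurent expansion `exp ((T/2)(z + z⁻¹)) = ∑ₖ I_k(T) zᵏ` with
absolutely summable coefficients, the modified Bessel functions. Hence `p_T(k) = e^{-T} I_k(T)`
is a Fourier coefficient, and the claim is the aliasing identity for an absolutely convergent
Laurent series `f(z) = ∑ₖ cₖ zᵏ`: averaging `z^{-x} f(z)` over the `M`-th roots `z` of `s`
keeps exactly the terms with `k ≡ x (mod M)`, because `∑_{z^M = s} z^m` is `M s^{m/M}` when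
`M ∣ m` and `0` otherwise.
-/

open Complex Polynomial

theorem IsPrimitiveRoot.sum_nthRoots_zpow {K : Type*} [Field K] {M : ℕ} {ζ α s : K}
    (hζ : IsPrimitiveRoot ζ M) (hα : α ^ M = s) (m : ℤ) :
    ((nthRoots M s).map (· ^ m)).sum = if (M : ℤ) ∣ m then M * s ^ (m / M) else 0 := by
  rw [hζ.nthRoots_eq hα, Multiset.map_map, ← Finset.range_val, ← Finset.sum_eq_multiset_sum]
  have hterm : ∀ j : ℕ, (ζ ^ j * α) ^ m = (ζ ^ m) ^ j * α ^ m := fun j => by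
    rw [mul_zpow, ← zpow_natCast ζ j, ← zpow_mul, mul_comm (j : ℤ), zpow_mul, zpow_natCast]
  simp only [Function.comp_apply, hterm, ← Finset.sum_mul]
  split_ifs with hdvd
  · obtain ⟨c, rfl⟩ := hdvd
    rcases M.eq_zero_or_pos with rfl | hM
    · simp
    rw [zpow_mul, zpow_natCast, hζ.pow_eq_one, one_zpow, zpow_mul, zpow_natCast, hα,
      Int.mul_ediv_cancel_left _ (by exact_mod_cast hM.ne')]
    simp
  · have hne : ζ ^ m ≠ 1 := fun h => hdvd ((hζ.zpow_eq_one_iff_dvd m).1 h)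
    have hpow : (ζ ^ m) ^ M = 1 := by
      rw [← zpow_natCast, ← zpow_mul, mul_comm, zpow_mul, zpow_natCast, hζ.pow_eq_one, one_zpow]
    rw [geom_sum_eq hne, hpow, sub_self, zero_div, zero_mul]

theorem Polynomial.ne_zero_of_mem_nthRoots {R : Type*} [CommRing R] [IsDomain R] {n : ℕ}
    {a η : R} (ha : a ≠ 0) (hη : η ∈ nthRoots n a) : η ≠ 0 := by
  rintro rfl
  rcases n.eq_zero_or_pos with rfl | hn
  · simp at hη
  · exact ha (((mem_nthRoots hn).1 hη).symm.trans (zero_pow hn.ne'))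

theorem injective_add_mul_natCast {M : ℕ} (hM : 0 < M) (x : ℤ) :
    Function.Injective fun h : ℤ => x + h * M :=
  (add_right_injective x).comp (mul_left_injective₀ (by exact_mod_cast hM.ne'))

theorem hasSum_multiset_sum {α β γ : Type*} [AddCommMonoid α] [TopologicalSpace α]
    [ContinuousAdd α] {S : Multiset γ} {f : γ → β → α} {a : γ → α}
    (h : ∀ i ∈ S, HasSum (f i) (a i)) :
    HasSum (fun b => (S.map fun i => f i b).sum) (S.map a).sum := by
  induction S using Multiset.induction_on with
  | empty => simp [hasSum_zero]
  | cons i S ih =>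
    simp only [Multiset.map_cons, Multiset.sum_cons]
    exact (h i (Multiset.mem_cons_self i S)).add (ih fun j hj => h j (Multiset.mem_cons_of_mem hj))

theorem summable_norm_tsum_fiberwise {β γ E : Type*} [NormedAddCommGroup E] [CompleteSpace E]
    {f : β → E} (hf : Summable fun b => ‖f b‖) (g : β → γ) :
    Summable fun c => ‖∑' b : g ⁻¹' {c}, f b‖ :=
  (hf.hasSum.tsum_fiberwise g).summable.of_nonneg_of_le (fun _ => norm_nonneg _)
    fun _ => norm_tsum_le_tsum_norm (hf.subtype _)

theorem hasSum_aliasing {c : ℤ → ℂ} {F : ℂ → ℂ} {M : ℕ} (hM : 0 < M) {s : ℂ} (hs : s ≠ 0)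
    (hF : ∀ z ∈ nthRoots M s, HasSum (fun k => c k * z ^ k) (F z)) (x : ℤ) :
    HasSum (fun h : ℤ => c (x + h * M) * s ^ h)
      ((M : ℂ)⁻¹ * ((nthRoots M s).map fun z => z ^ (-x) * F z).sum) := by
  obtain ⟨α, hα⟩ := IsAlgClosed.exists_pow_nat_eq s hM
  have hζ := Complex.isPrimitiveRoot_exp M hM.ne'
  have hMZ : (M : ℤ) ≠ 0 := by exact_mod_cast hM.ne'
  have hMC : (M : ℂ) ≠ 0 := by exact_mod_cast hM.ne'
  set f : ℤ → ℂ := fun k => if (M : ℤ) ∣ k - x then c k * s ^ ((k - x) / M) else 0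
  have hfilter : ∀ k, ((nthRoots M s).map fun z => z ^ (-x) * (c k * z ^ k)).sum = M * f k := by
    intro k
    have hz : ∀ z ∈ nthRoots M s, z ^ (-x) * (c k * z ^ k) = c k * z ^ (k - x) := by
      intro z hz
      rw [sub_eq_add_neg, zpow_add₀ (ne_zero_of_mem_nthRoots hs hz)]
      ring
    rw [Multiset.map_congr rfl hz, Multiset.sum_map_mul_left, hζ.sum_nthRoots_zpow hα]
    split_ifs <;> simp [f, *, mul_left_comm]
  have hf : HasSum f ((M : ℂ)⁻¹ * ((nthRoots M s).map fun z => z ^ (-x) * F z).sum) := by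
    have hsum := (hasSum_multiset_sum fun z hz => (hF z hz).mul_left (z ^ (-x))).mul_left
      (M : ℂ)⁻¹
    simpa only [hfilter, inv_mul_cancel_left₀ hMC] using hsum
  have hoff : ∀ k ∉ Set.range fun h : ℤ => x + h * M, f k = 0 := by
    rintro k hk
    refine if_neg fun ⟨h, hh⟩ => hk ⟨h, ?_⟩
    linear_combination -hh
  have hcomp : f ∘ (fun h : ℤ => x + h * M) = fun h => c (x + h * M) * s ^ h := by
    ext h
    simp [f, Int.mul_ediv_cancel _ hMZ]
  rw [← hcomp]
  exact ((injective_add_mul_natCast hM x).hasSum_iff hoff).2 hf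

theorem hasSum_exp_mul_exp (u v : ℂ) :
    HasSum (fun p : ℕ × ℕ => u ^ p.1 / p.1.factorial * (v ^ p.2 / p.2.factorial))
      (cexp u * cexp v) := by
  have hexp : ∀ w : ℂ, HasSum (fun n : ℕ => w ^ n / n.factorial) (cexp w) := fun w => by
    rw [Complex.exp_eq_exp_ℂ]; exact NormedSpace.expSeries_div_hasSum_exp w
  have hnorm : ∀ w : ℂ, Summable fun n : ℕ => ‖w ^ n / n.factorial‖ := fun w =>
    NormedSpace.norm_expSeries_div_summable w
  have hsum : Summable fun p : ℕ × ℕ => u ^ p.1 / p.1.factorial * (v ^ p.2 / p.2.factorial) :=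
    .of_norm <| by simpa only [norm_mul] using
      (hnorm u).mul_of_nonneg (hnorm v) (fun _ => norm_nonneg _) (fun _ => norm_nonneg _)
  -- elaborating `HasSum.mul` against the goal, instead of on its own, does not terminate
  exact ((hexp u).mul (hexp v) hsum :)

theorem integral_exp_int_mul_I (n : ℤ) :
    ∫ θ in (0 : ℝ)..2 * Real.pi, cexp (I * n * θ) = if n = 0 then (2 * Real.pi : ℂ) else 0 := by
  split_ifs with hn
  · simp [hn]
  · have hc : I * n ≠ 0 := mul_ne_zero I_ne_zero (by exact_mod_cast hn)
    rw [integral_exp_mul_complex hc]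
    have hperiod : I * n * ((2 * Real.pi : ℝ) : ℂ) = n * (2 * Real.pi * I) := by push_cast; ring
    rw [hperiod, Complex.exp_int_mul_two_pi_mul_I]
    simp

noncomputable def besselTerm (T : ℂ) (p : ℕ × ℕ) : ℂ :=
  (T / 2) ^ (p.1 + p.2) / (p.1.factorial * p.2.factorial)

/-- The modified Bessel function `I_k(T)`, as the coefficient of `zᵏ` in
`exp (T/2 * (z + z⁻¹)) = exp (T/2 * z) * exp (T/2 * z⁻¹)`. -/
noncomputable def besselI (T : ℂ) (k : ℤ) : ℂ :=
  ∑' p : (fun p : ℕ × ℕ => (p.1 : ℤ) - p.2) ⁻¹' {k}, besselTerm T p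

theorem summable_norm_besselTerm (T : ℂ) : Summable fun p => ‖besselTerm T p‖ := by
  have h := (Real.summable_pow_div_factorial ‖T / 2‖).mul_of_nonneg
    (Real.summable_pow_div_factorial ‖T / 2‖) (fun _ => by positivity) (fun _ => by positivity)
  convert h using 2 with p
  simp only [besselTerm, pow_add, Complex.norm_div, Complex.norm_mul, norm_pow,
    RCLike.norm_natCast]
  ring

theorem summable_norm_besselI (T : ℂ) : Summable fun k => ‖besselI T k‖ :=
  summable_norm_tsum_fiberwise (summable_norm_besselTerm T) _

theorem hasSum_besselTerm_mul_zpow (T : ℂ) {z : ℂ} (hz : z ≠ 0) :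
    HasSum (fun p : ℕ × ℕ => besselTerm T p * z ^ ((p.1 : ℤ) - p.2))
      (cexp (T / 2 * (z + z⁻¹))) := by
  rw [mul_add, Complex.exp_add]
  convert hasSum_exp_mul_exp (T / 2 * z) (T / 2 * z⁻¹) using 1
  ext p
  rw [besselTerm, zpow_sub₀ hz, zpow_natCast, zpow_natCast, mul_pow, mul_pow, inv_pow, pow_add]
  field_simp

theorem hasSum_besselI_mul_zpow (T : ℂ) {z : ℂ} (hz : z ≠ 0) :
    HasSum (fun k : ℤ => besselI T k * z ^ k) (cexp (T / 2 * (z + z⁻¹))) := by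
  refine ((hasSum_besselTerm_mul_zpow T hz).tsum_fiberwise
    (fun p : ℕ × ℕ => (p.1 : ℤ) - p.2)).congr_fun fun k => ?_
  rw [besselI, ← tsum_mul_right]
  refine tsum_congr fun p => ?_
  rw [show (p.1.1 : ℤ) - p.1.2 = k from p.2]

theorem integral_exp_neg_mul_exp_mul_cos (T : ℂ) (k : ℤ) :
    ∫ θ in (0 : ℝ)..2 * Real.pi, cexp (-I * k * θ) * cexp (T * cos θ) =
      2 * Real.pi * besselI T k := by
  have hexpand : ∀ θ : ℝ, HasSum (fun j : ℤ => besselI T j * cexp (I * (j - k : ℤ) * θ))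
      (cexp (-I * k * θ) * cexp (T * cos θ)) := by
    intro θ
    have hcos : T * cos θ = T / 2 * (cexp (θ * I) + (cexp (θ * I))⁻¹) := by
      rw [← Complex.exp_neg, ← neg_mul, ← Complex.two_cos]; ring
    rw [hcos]
    refine ((hasSum_besselI_mul_zpow T (Complex.exp_ne_zero (θ * I))).mul_left
      (cexp (-I * k * θ))).congr_fun fun j => ?_
    rw [← Complex.exp_int_mul, mul_left_comm, ← Complex.exp_add]
    push_cast
    ring_nf
  have hint := intervalIntegral.hasSum_integral_of_dominated_convergence (μ := MeasureTheory.volume)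
    (a := 0) (b := 2 * Real.pi) (fun j _ => ‖besselI T j‖)
    (fun j => (by fun_prop : Continuous fun θ : ℝ =>
      besselI T j * cexp (I * (j - k : ℤ) * θ)).aestronglyMeasurable)
    (fun j => MeasureTheory.ae_of_all _ fun θ _ => by simp [Complex.norm_exp])
    (MeasureTheory.ae_of_all _ fun _ _ => summable_norm_besselI T)
    intervalIntegrable_const
    (MeasureTheory.ae_of_all _ fun θ _ => hexpand θ)
  refine hint.unique ((hasSum_ite_eq k (2 * Real.pi * besselI T k : ℂ)).congr_fun fun j => ?_)
  rw [intervalIntegral.integral_const_mul, integral_exp_int_mul_I]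
  simp only [sub_eq_zero]
  split_ifs with h
  · rw [h]; ring
  · simp

theorem stmt_12_general (T : ℝ) (M : ℕ) (hM : 0 < M) (x : ℤ)
    (s : ℂ) (hs : ‖s‖ = 1)
    (pT : ℤ → ℂ)
    (hpT : ∀ k : ℤ, pT k = ((Real.exp (-T) / (2 * Real.pi) : ℝ) : ℂ) *
      ∫ θ in (0 : ℝ)..(2 * Real.pi),
        Complex.exp (-Complex.I * k * θ) * Real.exp (T * Real.cos θ)) :
    Summable (fun h : ℤ => ‖pT (x + h * M) * s ^ h‖) ∧
    (∑' h : ℤ, pT (x + h * M) * s ^ h)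
      = ((Real.exp (-T) : ℂ) / (M : ℂ)) *
        ((Polynomial.nthRoots M s).map
          (fun z => z ^ (-x) * Complex.exp ((T / 2 : ℂ) * (z + z⁻¹)))).sum := by
  have hp : ∀ k, pT k = Real.exp (-T) * besselI T k := fun k => by
    rw [hpT]
    push_cast
    rw [integral_exp_neg_mul_exp_mul_cos]
    field_simp
  have hs0 : s ≠ 0 := by rintro rfl; simp at hs
  constructor
  · refine (((summable_norm_besselI T).comp_injective (injective_add_mul_natCast hM x)).mul_left
      (Real.exp (-T))).congr fun h => ?_
    simp [hp, norm_zpow, hs, Complex.norm_exp]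
  · have hF : ∀ z ∈ nthRoots M s, HasSum (fun k => pT k * z ^ k)
        (Real.exp (-T) * cexp (T / 2 * (z + z⁻¹))) := fun z hz =>
      ((hasSum_besselI_mul_zpow T (ne_zero_of_mem_nthRoots hs0 hz)).mul_left _).congr_fun
        fun k => by rw [hp, mul_assoc]
    rw [(hasSum_aliasing hM hs0 hF x).tsum_eq]
    simp_rw [mul_left_comm _ ((Real.exp (-T) : ℂ)), Multiset.sum_map_mul_left]
    ring

/-- For `|s| = 1`, `Σ_{h∈ℤ} p_T(x + hM) s^h` converges absolutely and equals
`(e^{−T}/M) Σ_{z^M = s} z^{−x} e^{(T/2)(z + z⁻¹)}`, the sum on the right being over the `M`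
distinct complex `M`-th roots of `s`. -/
theorem stmt_12 (T : ℝ) (hT : 0 < T) (M : ℕ) (hM : 0 < M) (x : ℤ)
    (s : ℂ) (hs : ‖s‖ = 1)
    (pT : ℤ → ℂ)
    (hpT : ∀ k : ℤ, pT k = ((Real.exp (-T) / (2 * Real.pi) : ℝ) : ℂ) *
      ∫ θ in (0 : ℝ)..(2 * Real.pi),
        Complex.exp (-Complex.I * k * θ) * Real.exp (T * Real.cos θ)) :
    Summable (fun h : ℤ => ‖pT (x + h * M) * s ^ h‖) ∧
    (∑' h : ℤ, pT (x + h * M) * s ^ h)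
      = ((Real.exp (-T) : ℂ) / (M : ℂ)) *
        ((Polynomial.nthRoots M s).map
          (fun z => z ^ (-x) * Complex.exp ((T / 2 : ℂ) * (z + z⁻¹)))).sum :=
  stmt_12_general T M hM x s hs pT hpT
end

section
/- The function u ↦ u² − (2/π) ∫_{−√2}^{√2} log|u − s| · √(2 − s²) ds is constant on the open interval (−√2, √2). -/
/-!
Put `u = r cos φ`. The substitution `s = r cos θ` turns the integral into
`r² ∫₀^π log |r cos φ - r cos θ| sin² θ dθ`. Since
`cos φ - cos θ = 2 sin ((θ + φ) / 2) sin ((θ - φ) / 2)`, the logarithm splits into two shifted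
copies of `log sin`; a change of variables and `π`-periodicity merge them into
`2 ∫₀^π log (sin x) sin² (2x - φ) dx`. Only the Fourier coefficients of `log sin` at frequencies
`0` and `4` enter, namely `∫₀^π log sin = -π log 2` and `∫₀^π log (sin x) cos 4x dx = -π/4`, and
the result `π/2 (u² + r² (log (r/2) - 1/2))` depends on `u` only through `u²`.
-/

open Real MeasureTheory intervalIntegral Set Function Interval

lemma intervalIntegrable_log_mul {f w : ℝ → ℝ} (hf : ∀ x, AnalyticAt ℝ f x) (hw : Continuous w)
    (a b : ℝ) : IntervalIntegrable (fun x => log (f x) * w x) volume a b :=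
  (MeromorphicOn.intervalIntegrable_log fun x _ => (hf x).meromorphicAt).mul_continuousOn
    hw.continuousOn

lemma hasDerivAt_log_sin_mul_cos_four_antideriv {x : ℝ} (hx : sin x ≠ 0) :
    HasDerivAt (fun x => sin x * log (sin x) * (cos x * cos (2 * x))
        - x / 4 - sin (2 * x) / 4 - sin (4 * x) / 16)
      (log (sin x) * cos (4 * x)) x := by
  have h_prod := ((hasDerivAt_mul_log hx).comp x (hasDerivAt_sin x)).mul
    ((hasDerivAt_cos x).mul ((hasDerivAt_cos (2 * x)).comp x ((hasDerivAt_id x).const_mul 2)))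
  have h := ((h_prod.sub ((hasDerivAt_id x).div_const 4)).sub
    (((hasDerivAt_sin (2 * x)).comp x ((hasDerivAt_id x).const_mul 2)).div_const 4)).sub
    (((hasDerivAt_sin (4 * x)).comp x ((hasDerivAt_id x).const_mul 4)).div_const 16)
  refine h.congr_deriv ?_
  have h_cos_four : cos (4 * x) = 2 * cos (2 * x) ^ 2 - 1 := by
    rw [show 4 * x = 2 * (2 * x) by ring, cos_two_mul]
  simp only [Function.comp_apply, Pi.mul_apply, mul_one]
  rw [h_cos_four, sin_two_mul, cos_two_mul]
  linear_combination log (sin x) * (1 - 6 * cos x ^ 2) * sin_sq_add_cos_sq x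

theorem integral_log_sin_mul_cos_four : ∫ x in 0..π, log (sin x) * cos (4 * x) = -(π / 4) := by
  rw [integral_eq_sub_of_hasDerivAt_of_le pi_pos.le _
    (fun x hx => hasDerivAt_log_sin_mul_cos_four_antideriv
      (sin_pos_of_pos_of_lt_pi hx.1 hx.2).ne')
    (intervalIntegrable_log_mul (fun _ => analyticAt_sin) (by fun_prop) _ _)]
  · have h_sin_four_pi : sin (4 * π) = 0 := by simpa using sin_nat_mul_pi 4
    simp [h_sin_four_pi]
  · -- continuous up to the zeros of `sin`, because `x * log x` is
    have : Continuous fun x => sin x * log (sin x) := continuous_mul_log.comp continuous_sin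
    exact Continuous.continuousOn (by fun_prop)

theorem integral_log_sin_mul_sin_two_nat_mul (n : ℕ) :
    ∫ x in 0..π, log (sin x) * sin (2 * n * x) = 0 := by
  have h := integral_comp_sub_left (a := 0) (b := π) (fun x => log (sin x) * sin (2 * n * x)) π
  have h_odd (x : ℝ) : sin (2 * n * (π - x)) = -sin (2 * n * x) := by
    rw [show 2 * n * (π - x) = ((2 * n : ℕ) : ℝ) * π - 2 * n * x by push_cast; ring,
      sin_nat_mul_pi_sub, pow_mul]
    simp
  simp only [sin_pi_sub, h_odd, sub_self, sub_zero, mul_neg, intervalIntegral.integral_neg] at h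
  linarith

theorem integral_log_sin_mul_sin_two_mul_sub_sq (φ : ℝ) :
    ∫ x in 0..π, log (sin x) * sin (2 * x - φ) ^ 2 = -(π / 2 * log 2) + π / 8 * cos (2 * φ) := by
  have h_expand (x : ℝ) : log (sin x) * sin (2 * x - φ) ^ 2 = log (sin x) / 2
      - cos (2 * φ) / 2 * (log (sin x) * cos (4 * x))
      - sin (2 * φ) / 2 * (log (sin x) * sin (2 * (2 : ℕ) * x)) := by
    have h_double : cos (4 * x - 2 * φ) = 1 - 2 * sin (2 * x - φ) ^ 2 := by
      rw [show 4 * x - 2 * φ = 2 * (2 * x - φ) by ring, cos_two_mul, cos_sq']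
      ring
    rw [cos_sub] at h_double
    push_cast
    rw [show 2 * 2 * x = 4 * x by ring]
    linear_combination log (sin x) / 2 * h_double
  have h_int {w : ℝ → ℝ} (hw : Continuous w) :=
    intervalIntegrable_log_mul (fun _ => analyticAt_sin) hw 0 π
  have h_log : IntervalIntegrable (fun x => log (sin x)) volume 0 π := by
    simpa using h_int (w := fun _ => 1) continuous_const
  have h_cos := h_int (w := fun x => cos (4 * x)) (by fun_prop)
  have h_sin := h_int (w := fun x => sin (2 * (2 : ℕ) * x)) (by fun_prop)
  simp only [h_expand]
  rw [integral_sub ((h_log.div_const 2).sub (h_cos.const_mul _)) (h_sin.const_mul _),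
    integral_sub (h_log.div_const 2) (h_cos.const_mul _), intervalIntegral.integral_div,
    intervalIntegral.integral_const_mul, intervalIntegral.integral_const_mul,
    integral_log_sin_zero_pi, integral_log_sin_mul_cos_four, integral_log_sin_mul_sin_two_nat_mul]
  ring

theorem integral_log_sin_half_add_add_log_sin_half_sub_mul {w : ℝ → ℝ} (hw : Continuous w)
    (hw_even : ∀ θ, w (-θ) = w θ) (hw_per : Periodic w (2 * π)) (φ : ℝ) :
    ∫ θ in 0..π, (log (sin ((θ + φ) / 2)) + log (sin ((θ - φ) / 2))) * w θ
      = 2 * ∫ x in 0..π, log (sin x) * w (2 * x - φ) := by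
  set V : ℝ → ℝ := fun x => log (sin x) * w (2 * x - φ)
  have hV_per : Periodic V π := fun x => by
    simp only [V, sin_add_pi, log_neg_eq_log, show 2 * (x + π) - φ = 2 * x - φ + 2 * π by ring,
      hw_per _]
  have hV_int (a b : ℝ) : IntervalIntegrable V volume a b :=
    intervalIntegrable_log_mul (fun _ => analyticAt_sin) (by fun_prop) a b
  have h_add : ∫ θ in 0..π, log (sin ((θ + φ) / 2)) * w θ
      = 2 * ∫ x in φ / 2..φ / 2 + π / 2, V x := by
    calc _ = ∫ θ in 0..π, V (θ / 2 + φ / 2) := by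
          refine integral_congr fun θ _ => ?_
          simp only [V]
          ring_nf
      _ = _ := by rw [integral_comp_div_add V two_ne_zero]; simp [add_comm]
  have h_sub : ∫ θ in 0..π, log (sin ((θ - φ) / 2)) * w θ
      = 2 * ∫ x in φ / 2 - π / 2..φ / 2, V x := by
    calc _ = ∫ θ in 0..π, V (φ / 2 - θ / 2) := by
          refine integral_congr fun θ _ => ?_
          simp only [V]
          rw [show φ / 2 - θ / 2 = -((θ - φ) / 2) by ring, sin_neg, log_neg_eq_log,
            show 2 * -((θ - φ) / 2) - φ = -θ by ring, hw_even]
      _ = _ := by rw [integral_comp_sub_div V two_ne_zero]; simp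
  simp only [add_mul]
  rw [integral_add (intervalIntegrable_log_mul (fun _ => by fun_prop) hw _ _)
      (intervalIntegrable_log_mul (fun _ => by fun_prop) hw _ _), h_add, h_sub, ← mul_add,
    add_comm, integral_add_adjacent_intervals (hV_int _ _) (hV_int _ _),
    show φ / 2 + π / 2 = φ / 2 - π / 2 + π by ring, hV_per.intervalIntegral_add_eq _ 0, zero_add]

-- `Real.log x = Real.log |x|`, so no absolute values are needed here.
lemma log_mul_cos_sub_mul_cos {r φ θ : ℝ} (hr : r ≠ 0) (h_add : sin ((θ + φ) / 2) ≠ 0)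
    (h_sub : sin ((θ - φ) / 2) ≠ 0) :
    log (r * cos φ - r * cos θ)
      = log (2 * r) + (log (sin ((θ + φ) / 2)) + log (sin ((θ - φ) / 2))) := by
  have h_prod : r * cos φ - r * cos θ = 2 * r * (sin ((θ + φ) / 2) * sin ((θ - φ) / 2)) := by
    rw [← mul_sub, cos_sub_cos, show (φ - θ) / 2 = -((θ - φ) / 2) by ring, sin_neg, add_comm φ]
    ring
  rw [h_prod, log_mul (by positivity) (mul_ne_zero h_add h_sub), log_mul h_add h_sub]

theorem integral_log_mul_cos_sub_mul_cos_mul_sin_sq {r φ : ℝ} (hr : r ≠ 0) (hφ : φ ∈ Ioo 0 π) :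
    ∫ θ in 0..π, log (r * cos φ - r * cos θ) * sin θ ^ 2
      = π / 2 * log (r / 2) + π / 4 * cos (2 * φ) := by
  have h_ae : ∀ᵐ θ ∂volume, θ ∈ Ι 0 π → log (r * cos φ - r * cos θ) * sin θ ^ 2
      = log (2 * r) * sin θ ^ 2
        + (log (sin ((θ + φ) / 2)) + log (sin ((θ - φ) / 2))) * sin θ ^ 2 := by
    filter_upwards [volume.ae_ne φ] with θ hθφ hθ
    rw [uIoc_of_le pi_pos.le] at hθ
    have h_add : sin ((θ + φ) / 2) ≠ 0 :=
      (sin_pos_of_pos_of_lt_pi (by linarith [hθ.1, hφ.1]) (by linarith [hθ.2, hφ.2])).ne'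
    have h_sub : sin ((θ - φ) / 2) ≠ 0 := by
      rw [Ne, sin_eq_zero_iff_of_lt_of_lt (by linarith [hθ.1, hφ.2, pi_pos])
        (by linarith [hθ.2, hφ.1, pi_pos])]
      intro h
      exact hθφ (by linarith)
    rw [log_mul_cos_sub_mul_cos hr h_add h_sub]
    ring
  have h_w : Continuous fun θ : ℝ => sin θ ^ 2 := by fun_prop
  have h_int : IntervalIntegrable (fun θ => (log (sin ((θ + φ) / 2)) + log (sin ((θ - φ) / 2)))
      * sin θ ^ 2) volume 0 π := by
    simpa only [add_mul] using (intervalIntegrable_log_mul (fun _ => by fun_prop) h_w _ _).add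
      (intervalIntegrable_log_mul (fun _ => by fun_prop) h_w _ _)
  rw [integral_congr_ae h_ae, integral_add (h_w.intervalIntegrable _ _ |>.const_mul _) h_int,
    intervalIntegral.integral_const_mul, integral_sin_sq,
    integral_log_sin_half_add_add_log_sin_half_sub_mul h_w (fun θ => by rw [sin_neg, neg_sq])
      (fun θ => by rw [sin_add_two_pi]), integral_log_sin_mul_sin_two_mul_sub_sq,
    log_mul two_ne_zero hr, log_div hr two_ne_zero]
  simp only [sin_zero, sin_pi, zero_mul, sub_zero]
  ring

theorem integral_symm_eq_integral_comp_mul_cos {r : ℝ} (hr : 0 ≤ r) (g : ℝ → ℝ) :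
    ∫ s in -r..r, g s = ∫ θ in 0..π, g (r * cos θ) * (r * sin θ) := by
  have h := integral_Icc_deriv_smul_of_deriv_nonpos (g := g) (f := fun θ => r * cos θ)
    (f' := fun θ => -(r * sin θ)) (by fun_prop)
    (fun θ _ => by simpa using (hasDerivAt_cos θ).const_mul r)
    (fun θ hθ => neg_nonpos.2 (mul_nonneg hr (sin_nonneg_of_nonneg_of_le_pi hθ.1.le hθ.2.le)))
    pi_pos.le
  simp only [cos_pi, cos_zero, mul_neg, mul_one, smul_eq_mul, neg_mul, MeasureTheory.integral_neg,
    neg_inj] at h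
  rw [integral_of_le (by linarith), integral_of_le pi_pos.le, ← integral_Icc_eq_integral_Ioc,
    ← integral_Icc_eq_integral_Ioc, ← h]
  simp only [mul_comm]

theorem integral_log_abs_sub_mul_sqrt_sq_sub_sq {r u : ℝ} (hr : 0 < r) (hu : u ∈ Ioo (-r) r) :
    ∫ s in -r..r, log |u - s| * √(r ^ 2 - s ^ 2)
      = π / 2 * (u ^ 2 + r ^ 2 * (log (r / 2) - 1 / 2)) := by
  have h_lt : u / r < 1 := (div_lt_one hr).2 hu.2
  have h_gt : -1 < u / r := by rw [lt_div_iff₀ hr]; linarith [hu.1]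
  set φ := arccos (u / r)
  have hφ : φ ∈ Ioo 0 π := ⟨arccos_pos.2 h_lt, arccos_lt_pi.2 h_gt⟩
  have hu_eq : u = r * cos φ := by rw [cos_arccos h_gt.le h_lt.le]; field_simp
  rw [integral_symm_eq_integral_comp_mul_cos hr.le]
  calc _ = ∫ θ in 0..π, r ^ 2 * (log (r * cos φ - r * cos θ) * sin θ ^ 2) := by
        refine integral_congr fun θ hθ => ?_
        rw [uIcc_of_le pi_pos.le] at hθ
        have h_sqrt : √(r ^ 2 - (r * cos θ) ^ 2) = r * sin θ := by
          rw [show r ^ 2 - (r * cos θ) ^ 2 = (r * sin θ) ^ 2 by rw [mul_pow, mul_pow, sin_sq]; ring]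
          exact sqrt_sq (mul_nonneg hr.le (sin_nonneg_of_nonneg_of_le_pi hθ.1 hθ.2))
        simp only [h_sqrt, log_abs, hu_eq]
        ring
    _ = _ := by
      rw [intervalIntegral.integral_const_mul,
        integral_log_mul_cos_sub_mul_cos_mul_sin_sq hr.ne' hφ, cos_two_mul, hu_eq]
      ring

/-- The function
`u ↦ u² − (2/π) ∫_{−√2}^{√2} log|u − s| √(2 − s²) ds` is constant on `(−√2, √2)`. -/
theorem stmt_13 : ∃ c : ℝ, ∀ u ∈ Set.Ioo (-Real.sqrt 2) (Real.sqrt 2),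
    u ^ 2 - (2 / Real.pi) *
      ∫ s in (-Real.sqrt 2)..(Real.sqrt 2), Real.log |u - s| * Real.sqrt (2 - s ^ 2) = c := by
  refine ⟨-(√2 ^ 2 * (log (√2 / 2) - 1 / 2)), fun u hu => ?_⟩
  have h := integral_log_abs_sub_mul_sqrt_sq_sub_sq (by positivity) hu
  rw [sq_sqrt zero_le_two] at h ⊢
  rw [h]
  field_simp
  ring
end

section
/- Let R(z) be the unique analytic function on ℂ ∖ [−√2, √2] satisfying R(z)² = z² − 2 and R(z)/z → 1 as |z| → ∞. Then for every z ∈ ℂ ∖ [−√2, √2], (1/π) ∫_{−√2}^{√2} √(2 − s²)/(z − s) ds = z − R(z). -/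
/-!
Both sides are holomorphic on the connected open set `ℂ ∖ [-√2, √2]`: the left side because it is
a Stieltjes transform of the semicircle density, the right side by hypothesis. By the identity
theorem it suffices to compare them on the ray `x > √2`. There `R x = √(x² - 2)`, the root with
positive real part being forced by `R x / x → 1`, and the integral is computed by substituting
`s = √2 sin t` and then `u = tan (t / 2)`.
-/

open Real Set Filter Topology MeasureTheory

theorem Complex.ofReal_image_Icc (a b : ℝ) :
    ofReal '' Icc a b = {z : ℂ | z.im = 0 ∧ a ≤ z.re ∧ z.re ≤ b} := by
  ext z
  constructor
  · rintro ⟨s, hs, rfl⟩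
    exact ⟨ofReal_im s, hs⟩
  · rintro ⟨him, hs⟩
    exact ⟨z.re, hs, ext rfl (by simp [him])⟩

theorem Complex.isPreconnected_compl_ofReal_image_Icc (a b : ℝ) :
    IsPreconnected (ofReal '' Icc a b)ᶜ := by
  have hupper : IsPreconnected ({z : ℂ | b < z.re} ∪ {z | 0 < z.im}) :=
    (convex_halfSpace_re_gt b).isPreconnected.union (b + 1 + I) (by simp) (by simp)
      (convex_halfSpace_im_gt 0).isPreconnected
  have hlower : IsPreconnected ({z : ℂ | z.im < 0} ∪ {z | z.re < a}) :=
    (convex_halfSpace_im_lt 0).isPreconnected.union (a - 1 - I) (by simp) (by simp)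
      (convex_halfSpace_re_lt a).isPreconnected
  convert hupper.union (b + 1 - I) (by simp) (by simp) hlower using 1
  ext z
  simp only [ofReal_image_Icc, mem_compl_iff, mem_ofPred_eq, mem_union, not_and, not_le]
  constructor
  · intro h
    rcases lt_trichotomy z.im 0 with him | him | him
    · exact Or.inr (Or.inl him)
    · rcases lt_or_ge z.re a with hre | hre
      · exact Or.inr (Or.inr hre)
      · exact Or.inl (Or.inl (h him hre))
    · exact Or.inl (Or.inr him)
  · rintro ((h | h) | (h | h)) him hre <;> linarith

theorem analyticOnNhd_integral_div_sub {a b : ℝ} (hab : a ≤ b) {f : ℝ → ℝ}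
    (hf : IntegrableOn f (Icc a b)) (hf0 : ∀ s ∈ Icc a b, 0 ≤ f s) :
    AnalyticOnNhd ℂ (fun z : ℂ => ∫ s in a..b, (f s : ℂ) / (z - s))
      (Complex.ofReal '' Icc a b)ᶜ := by
  -- the integral is minus the Stieltjes transform of the measure `f(s) ds` on `[a, b]`
  set μ := (volume.restrict (Icc a b)).withDensity fun s => ENNReal.ofReal (f s)
  have : IsFiniteMeasure μ := isFiniteMeasure_withDensity_ofReal hf.2
  have hsupp : μ.support ⊆ Icc a b := Measure.support_subset_of_isClosed isClosed_Icc
    (withDensity_absolutelyContinuous _ _ (ae_restrict_mem measurableSet_Icc))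
  have hopen : IsOpen (Complex.ofReal '' Icc a b)ᶜ :=
    (isCompact_Icc.image Complex.continuous_ofReal).isClosed.isOpen_compl
  have hT : AnalyticOnNhd ℂ (resolventTransform μ) (Complex.ofReal '' Icc a b)ᶜ :=
    hopen.analyticOn_iff_analyticOnNhd.1
      (analyticOn_resolventTransform.mono (compl_subset_compl.2 (image_mono hsupp)))
  convert hT.neg using 1
  funext z
  rw [Pi.neg_apply, resolventTransform_apply, integral_withDensity_eq_integral_toReal_smul₀
    hf.aemeasurable.ennreal_ofReal (ae_of_all _ fun _ => ENNReal.ofReal_lt_top),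
    intervalIntegral.integral_of_le hab, ← integral_Icc_eq_integral_Ioc, ← integral_neg]
  refine setIntegral_congr_fun measurableSet_Icc fun s hs => ?_
  simp only [resolvent, Ring.inverse_eq_inv', ENNReal.toReal_ofReal (hf0 s hs), Complex.real_smul,
    Complex.coe_algebraMap]
  rw [div_eq_mul_inv, ← neg_sub z (s : ℂ), inv_neg, mul_neg, neg_neg]

theorem AnalyticOnNhd.eqOn_of_eventually_eq_ofReal_atTop {E : Type*} [NormedAddCommGroup E]
    [NormedSpace ℂ E] {f g : ℂ → E} {U : Set ℂ} (hf : AnalyticOnNhd ℂ f U)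
    (hg : AnalyticOnNhd ℂ g U) (hU : IsPreconnected U)
    (hfg : ∀ᶠ x : ℝ in atTop, (x : ℂ) ∈ U ∧ f x = g x) : EqOn f g U := by
  obtain ⟨N, hN⟩ := eventually_atTop.1 hfg
  have hofReal : Tendsto ((↑) : ℝ → ℂ) (𝓝[>] (N + 1)) (𝓝[≠] ((N + 1 : ℝ) : ℂ)) :=
    tendsto_nhdsWithin_of_tendsto_nhds_of_eventually_within _
      (Complex.continuous_ofReal.continuousWithinAt)
      (eventually_nhdsWithin_of_forall fun x hx => Complex.ofReal_injective.ne (ne_of_gt hx))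
  refine hf.eqOn_of_preconnected_of_frequently_eq hg hU (hN _ (by linarith)).1
    (hofReal.frequently (Eventually.frequently ?_))
  filter_upwards [self_mem_nhdsWithin] with x hx
  exact (hN x (by linarith [mem_Ioi.1 hx])).2

theorem eventually_eq_sqrt_of_sq_eq {g : ℝ → ℂ} {c : ℝ}
    (hsq : ∀ᶠ x : ℝ in atTop, g x ^ 2 = (x : ℂ) ^ 2 - c)
    (hlim : Tendsto (fun x : ℝ => g x / x) atTop (𝓝 1)) :
    ∀ᶠ x : ℝ in atTop, g x = √(x ^ 2 - c) := by
  have hre : ∀ᶠ x : ℝ in atTop, 0 < (g x / x).re :=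
    ((Complex.continuous_re.tendsto 1).comp hlim).eventually_const_lt (by simp)
  have hc : ∀ᶠ x : ℝ in atTop, c < x ^ 2 :=
    (tendsto_pow_atTop two_ne_zero).eventually_gt_atTop c
  filter_upwards [hsq, hre, hc, eventually_gt_atTop 0] with x hsq hre hc hx
  have hroot : g x ^ 2 = ((√(x ^ 2 - c) : ℝ) : ℂ) ^ 2 := by
    rw [← Complex.ofReal_pow, sq_sqrt (by linarith), hsq]
    push_cast
    ring
  refine (sq_eq_sq_iff_eq_or_eq_neg.1 hroot).resolve_right fun hneg => ?_
  rw [hneg, Complex.div_ofReal_re, Complex.neg_re, Complex.ofReal_re] at hre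
  exact hre.not_ge (div_nonpos_of_nonpos_of_nonneg (neg_nonpos.2 (sqrt_nonneg _)) hx.le)

theorem sub_mul_sin_pos {a x : ℝ} (hax : |a| < x) (t : ℝ) : 0 < x - a * sin t := by
  have : |a * sin t| ≤ |a| := by
    rw [abs_mul]; exact mul_le_of_le_one_right (abs_nonneg a) (abs_sin_le_one t)
  linarith [le_abs_self (a * sin t)]

theorem hasDerivAt_arctan_tan_half {a x t : ℝ} (hax : |a| < x) (ht : t ∈ Ioo (-π) π) :
    HasDerivAt
      (fun t => 2 / √(x ^ 2 - a ^ 2) * arctan ((x * tan (t / 2) - a) / √(x ^ 2 - a ^ 2)))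
      (x - a * sin t)⁻¹ t := by
  set c := √(x ^ 2 - a ^ 2)
  have hpos : 0 < x ^ 2 - a ^ 2 := by nlinarith [abs_nonneg a, sq_abs a]
  have hc : c ≠ 0 := (sqrt_pos.2 hpos).ne'
  have hc2 : c ^ 2 = x ^ 2 - a ^ 2 := sq_sqrt hpos.le
  have hcos : cos (t / 2) ≠ 0 :=
    (cos_pos_of_mem_Ioo (x := t / 2) ⟨by linarith [ht.1], by linarith [ht.2]⟩).ne'
  have htan : HasDerivAt (fun t => tan (t / 2)) (1 / cos (t / 2) ^ 2 * (1 / 2)) t := by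
    simpa [Function.comp_def] using
      (hasDerivAt_tan hcos).comp t ((hasDerivAt_id t).div_const 2)
  refine ((((htan.const_mul x).sub_const a).div_const c).arctan.const_mul (2 / c)).congr_deriv ?_
  have hsin : sin t = 2 * sin (t / 2) * cos (t / 2) := by
    rw [← sin_two_mul, mul_div_cancel₀ t two_ne_zero]
  have hden := (sub_mul_sin_pos hax t).ne'
  rw [tan_eq_sin_div_cos]
  field_simp
  linear_combination
    -(x * a) * hsin - cos (t / 2) ^ 2 * hc2 - x ^ 2 * sin_sq_add_cos_sq (t / 2)

theorem integral_inv_sub_mul_sin {a x : ℝ} (hax : |a| < x) :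
    ∫ t in (-(π / 2))..(π / 2), (x - a * sin t)⁻¹ = π / √(x ^ 2 - a ^ 2) := by
  have hpos : 0 < x ^ 2 - a ^ 2 := by nlinarith [abs_nonneg a, sq_abs a]
  have hc : 0 < √(x ^ 2 - a ^ 2) := sqrt_pos.2 hpos
  have hc2 : √(x ^ 2 - a ^ 2) ^ 2 = x ^ 2 - a ^ 2 := sq_sqrt hpos.le
  have hderiv (t : ℝ) (ht : t ∈ uIcc (-(π / 2)) (π / 2)) := by
    rw [uIcc_of_le (by linarith [pi_pos])] at ht
    exact hasDerivAt_arctan_tan_half (t := t) hax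
      ⟨by linarith [ht.1, pi_pos], by linarith [ht.2, pi_pos]⟩
  have hcont : Continuous fun t => (x - a * sin t)⁻¹ :=
    (continuous_const.sub (continuous_const.mul continuous_sin)).inv₀
      fun t => (sub_mul_sin_pos hax t).ne'
  rw [intervalIntegral.integral_eq_sub_of_hasDerivAt hderiv (hcont.intervalIntegrable _ _)]
  have hxa : 0 < (x - a) / √(x ^ 2 - a ^ 2) := div_pos (by linarith [le_abs_self a]) hc
  -- the two endpoint terms add up to `arctan y + arctan y⁻¹ = π / 2`
  have hinv : (x + a) / √(x ^ 2 - a ^ 2) = ((x - a) / √(x ^ 2 - a ^ 2))⁻¹ := by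
    rw [inv_div, div_eq_div_iff hc.ne' (by linarith [le_abs_self a])]
    linear_combination -hc2
  simp only [show π / 2 / 2 = π / 4 by ring, show -(π / 2) / 2 = -(π / 4) by ring, tan_neg,
    tan_pi_div_four, mul_one, mul_neg_one, ← neg_add', neg_div, arctan_neg, hinv,
    arctan_inv_of_pos hxa]
  field_simp
  ring

theorem mul_cos_mul_sqrt_sq_sub_sq_div_sub {a x t : ℝ} (ha : 0 ≤ a) (hax : |a| < x)
    (ht : t ∈ Icc (-(π / 2)) (π / 2)) :
    a * cos t * (√(a ^ 2 - (a * sin t) ^ 2) / (x - a * sin t))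
      = (a ^ 2 - x ^ 2) * (x - a * sin t)⁻¹ + (x + a * sin t) := by
  have hsqrt : √(a ^ 2 - (a * sin t) ^ 2) = a * cos t := by
    rw [← sqrt_sq (mul_nonneg ha (cos_nonneg_of_mem_Icc ht))]
    congr 1
    linear_combination -(a ^ 2) * sin_sq_add_cos_sq t
  have hden := (sub_mul_sin_pos hax t).ne'
  rw [hsqrt]
  field_simp
  linear_combination a ^ 2 * sin_sq_add_cos_sq t

theorem integral_sqrt_sq_sub_sq_div_sub {a x : ℝ} (ha : 0 ≤ a) (hx : a < x) :
    ∫ s in (-a)..a, √(a ^ 2 - s ^ 2) / (x - s) = π * (x - √(x ^ 2 - a ^ 2)) := by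
  have hax : |a| < x := by rwa [abs_of_nonneg ha]
  have hg : ContinuousOn (fun s => √(a ^ 2 - s ^ 2) / (x - s))
      ((fun t => a * sin t) '' uIcc (-(π / 2)) (π / 2)) := by
    refine (continuous_const.sub (continuous_pow 2)).sqrt.continuousOn.div
      (continuous_const.sub continuous_id).continuousOn ?_
    rintro _ ⟨t, -, rfl⟩
    exact (sub_mul_sin_pos hax t).ne'
  have hsubst := intervalIntegral.integral_deriv_smul_comp'
    (fun t _ => (hasDerivAt_sin t).const_mul a)
    (continuous_const.mul continuous_cos).continuousOn hg
  simp only [sin_neg, sin_pi_div_two, mul_neg, mul_one] at hsubst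
  have hintegrand : EqOn
      (fun t => (a * cos t) • ((fun s => √(a ^ 2 - s ^ 2) / (x - s)) ∘ fun t => a * sin t) t)
      (fun t => (a ^ 2 - x ^ 2) * (x - a * sin t)⁻¹ + (x + a * sin t))
      (uIcc (-(π / 2)) (π / 2)) := fun t ht =>
    mul_cos_mul_sqrt_sq_sub_sq_div_sub ha hax (by rwa [uIcc_of_le (by linarith [pi_pos])] at ht)
  have hcont_inv : Continuous fun t => (a ^ 2 - x ^ 2) * (x - a * sin t)⁻¹ :=
    continuous_const.mul ((continuous_const.sub (continuous_const.mul continuous_sin)).inv₀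
      fun t => (sub_mul_sin_pos hax t).ne')
  have hcont_sin : Continuous fun t => a * sin t := continuous_const.mul continuous_sin
  have hcont_lin : Continuous fun t => x + a * sin t := continuous_const.add hcont_sin
  rw [← hsubst, intervalIntegral.integral_congr hintegrand, intervalIntegral.integral_add
    (hcont_inv.intervalIntegrable _ _) (hcont_lin.intervalIntegrable _ _),
    intervalIntegral.integral_const_mul, integral_inv_sub_mul_sin hax,
    intervalIntegral.integral_add (f := fun _ => x) intervalIntegrable_const
      (hcont_sin.intervalIntegrable _ _),
    intervalIntegral.integral_const, intervalIntegral.integral_const_mul, integral_sin,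
    cos_neg, sub_self, mul_zero, add_zero, smul_eq_mul]
  have hpos : 0 < x ^ 2 - a ^ 2 := by nlinarith
  have hc : 0 < √(x ^ 2 - a ^ 2) := sqrt_pos.2 hpos
  field_simp
  linear_combination 2 * sq_sqrt hpos.le

/-- Let `R` be the analytic branch of `√(z² − 2)` on `ℂ ∖ [−√2, √2]` with
`R(z)/z → 1` as `|z| → ∞`. Then for every `z` off the segment,
`(1/π) ∫_{−√2}^{√2} √(2 − s²)/(z − s) ds = z − R(z)`. -/
theorem stmt_14 (R : ℂ → ℂ)
    (hR : AnalyticOnNhd ℂ R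
      {z : ℂ | ¬(z.im = 0 ∧ -Real.sqrt 2 ≤ z.re ∧ z.re ≤ Real.sqrt 2)})
    (hR2 : ∀ z : ℂ, ¬(z.im = 0 ∧ -Real.sqrt 2 ≤ z.re ∧ z.re ≤ Real.sqrt 2) →
      R z ^ 2 = z ^ 2 - 2)
    (hRinf : Filter.Tendsto (fun z : ℂ => R z / z)
      (Filter.comap (fun z : ℂ => ‖z‖) Filter.atTop) (nhds 1))
    (z : ℂ) (hz : ¬(z.im = 0 ∧ -Real.sqrt 2 ≤ z.re ∧ z.re ≤ Real.sqrt 2)) :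
    (1 / (Real.pi : ℂ)) *
      ∫ s in (-Real.sqrt 2)..(Real.sqrt 2), ((Real.sqrt (2 - s ^ 2) : ℝ) : ℂ) / (z - s)
    = z - R z := by
  set K := Complex.ofReal '' Icc (-√2) √2
  have hK : {z : ℂ | ¬(z.im = 0 ∧ -√2 ≤ z.re ∧ z.re ≤ √2)} = Kᶜ := by
    simp only [K, Complex.ofReal_image_Icc]; rfl
  have hray : ∀ᶠ x : ℝ in atTop, (x : ℂ) ∈ Kᶜ := by
    filter_upwards [eventually_gt_atTop √2] with x hx
    rw [mem_compl_iff, Complex.ofReal_injective.mem_set_image]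
    exact fun h => hx.not_ge h.2
  have hRray : ∀ᶠ x : ℝ in atTop, R x = √(x ^ 2 - 2) := by
    rw [comap_norm_atTop] at hRinf
    refine eventually_eq_sqrt_of_sq_eq ?_ (hRinf.comp (RCLike.tendsto_ofReal_atTop_cobounded ℂ))
    filter_upwards [hray] with x hx
    rw [← hK] at hx
    exact_mod_cast hR2 x hx
  have hL : AnalyticOnNhd ℂ
      (fun w => (1 / (π : ℂ)) * ∫ s in (-√2)..√2, ((√(2 - s ^ 2) : ℝ) : ℂ) / (w - s)) Kᶜ :=
    analyticOnNhd_const.mul (analyticOnNhd_integral_div_sub (by linarith [sqrt_nonneg 2])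
      (continuous_const.sub (continuous_pow 2)).sqrt.integrableOn_Icc fun _ _ => sqrt_nonneg _)
  rw [hK] at hR
  refine hL.eqOn_of_eventually_eq_ofReal_atTop (analyticOnNhd_id.sub hR)
    (Complex.isPreconnected_compl_ofReal_image_Icc _ _) ?_ (hK ▸ hz)
  filter_upwards [hray, hRray, eventually_gt_atTop √2] with x hxK hRx hx
  have hreal := integral_sqrt_sq_sub_sq_div_sub (sqrt_nonneg 2) hx
  rw [sq_sqrt zero_le_two] at hreal
  refine ⟨hxK, ?_⟩
  simp only [Pi.sub_apply, hRx, ← Complex.ofReal_sub, ← Complex.ofReal_div,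
    intervalIntegral.integral_ofReal, hreal]
  push_cast
  field_simp
end
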